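/- arXiv:2601.03691 — 4 statements merged into one kernel-verified Lean document; each statement's English description precedes it below -/
import Mathlib

section
/- Let k be a field of characteristic 2. There is no k-subspace W of sl₂(k) such that sl₂(k) is the internal direct sum of W and the line k·1 spanned by the identity matrix, and W is closed under the Lie bracket (⁅w,w'⁆ ∈ W for all w, w' ∈ W). In other words, the extension 0 → k·1 → sl₂(k) → sl₂(k)/k·1 → 0 of Lie algebras does not split. -/
/-! The off-diagonal matrix units `e = E₀₁` and `f = E₁₀` have trace zero, so they are
congruent modulo scalars to elements of `W`. Scalars are central, hence the bracket of those
two elements of `W` is `[e, f] = diag(1, -1)`, which is the identity in characteristic `2`.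
Thus `1 ∈ W ∩ k·1 = 0`, which is absurd. -/

open Matrix Submodule

section ScalarLine

variable {k A : Type*} [CommSemiring k] [Ring A] [Algebra k A]

theorem sub_smul_one_commutator (a b : A) (c d : k) :
    (a - c • 1) * (b - d • 1) - (b - d • 1) * (a - c • 1) = a * b - b * a := by
  simp only [sub_mul, mul_sub, smul_sub, smul_mul_assoc, mul_smul_comm, one_mul, mul_one, smul_smul,
    mul_comm c d]
  abel

theorem exists_sub_smul_one_mem_of_mem_sup_span_one {W : Submodule k A} {a : A}
    (ha : a ∈ W ⊔ span k {1}) : ∃ c : k, a - c • 1 ∈ W := by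
  obtain ⟨w, hw, z, hz, rfl⟩ := mem_sup.mp ha
  obtain ⟨c, rfl⟩ := mem_span_singleton.mp hz
  exact ⟨c, by simpa using hw⟩

theorem commutator_mem_of_mem_sup_span_one {W : Submodule k A}
    (hW : ∀ w ∈ W, ∀ w' ∈ W, w * w' - w' * w ∈ W) {a b : A}
    (ha : a ∈ W ⊔ span k {1}) (hb : b ∈ W ⊔ span k {1}) : a * b - b * a ∈ W := by
  obtain ⟨c, hc⟩ := exists_sub_smul_one_mem_of_mem_sup_span_one ha
  obtain ⟨d, hd⟩ := exists_sub_smul_one_mem_of_mem_sup_span_one hb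
  simpa only [sub_smul_one_commutator] using hW _ hc _ hd

end ScalarLine

theorem Matrix.single_commutator_eq_one_of_two_eq_zero {R : Type*} [Ring R] (h2 : (2 : R) = 0) :
    single 0 1 (1 : R) * single 1 0 1 - single 1 0 1 * single 0 1 1 =
      (1 : Matrix (Fin 2) (Fin 2) R) := by
  have hneg : (-1 : R) = 1 := neg_eq_of_add_eq_zero_right (one_add_one_eq_two.trans h2)
  ext i j
  fin_cases i <;> fin_cases j <;> simp [Matrix.mul_apply, Matrix.single, hneg]

/-- Over a field `k` of characteristic `2`, there is no `k`-subspace `W` of `sl₂(k)`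
that is a vector-space complement of the line `k·1` spanned by the identity matrix and is
closed under the commutator bracket: the extension `0 → k·1 → sl₂(k) → sl₂(k)/k·1 → 0`
does not split. -/
theorem sl2_extension_does_not_split (k : Type*) [Field k] (h2 : (2 : k) = 0) :
    ¬ ∃ W : Submodule k (Matrix (Fin 2) (Fin 2) k),
        W ⊓ Submodule.span k {(1 : Matrix (Fin 2) (Fin 2) k)} = ⊥ ∧
        W ⊔ Submodule.span k {(1 : Matrix (Fin 2) (Fin 2) k)} =
          LinearMap.ker (Matrix.traceLinearMap (Fin 2) k k) ∧
        (∀ w ∈ W, ∀ w' ∈ W, w * w' - w' * w ∈ W) := by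
  rintro ⟨W, hinf, hsup, hbr⟩
  have hsingle {i j : Fin 2} (hij : i ≠ j) : single i j (1 : k) ∈ W ⊔ span k {1} :=
    hsup ▸ trace_single_eq_of_ne i j 1 hij
  have h1W : (1 : Matrix (Fin 2) (Fin 2) k) ∈ W :=
    single_commutator_eq_one_of_two_eq_zero h2 ▸
      commutator_mem_of_mem_sup_span_one hbr (hsingle (by decide)) (hsingle (by decide))
  have h1inf : (1 : Matrix (Fin 2) (Fin 2) k) ∈ W ⊓ span k {1} :=
    ⟨h1W, mem_span_singleton_self _⟩
  rw [hinf, mem_bot] at h1inf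
  exact one_ne_zero h1inf
end

section
/- Let k be a field of characteristic 2. Let Z be the Lie ideal of gl₂(k) consisting of the scalar matrices (which is the center of the Lie algebra gl₂(k)), and let pgl₂(k) be the quotient Lie algebra gl₂(k)/Z. Then there is no isomorphism of Lie algebras over k between sl₂(k) and pgl₂(k). -/
open LieAlgebra

attribute [local instance 100] LieRing.ofAssociativeRing

/-! In characteristic `2` a traceless `2 × 2` matrix has equal diagonal entries, and the bracket of
two such matrices is scalar; hence `⁅⁅a, b⁆, c⁆ = 0` on `sl₂`. In `pgl₂` this identity fails:
`⁅⁅E₀₀, E₀₁⁆, E₀₀⁆ = -E₀₁`, and `E₀₁` is not central because `⁅E₀₀, E₀₁⁆ = E₀₁`. -/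

namespace Matrix

variable {R : Type*} [CommRing R]

lemma lie_eq_smul_one_of_trace_eq_zero (h2 : (2 : R) = 0) {A B : Matrix (Fin 2) (Fin 2) R}
    (hA : A.trace = 0) (hB : B.trace = 0) :
    ⁅A, B⁆ = (A 0 1 * B 1 0 - A 1 0 * B 0 1) • (1 : Matrix (Fin 2) (Fin 2) R) := by
  have hA' : A 1 1 = A 0 0 := by linear_combination (trace_fin_two A).symm.trans hA - A 0 0 * h2
  have hB' : B 1 1 = B 0 0 := by linear_combination (trace_fin_two B).symm.trans hB - B 0 0 * h2
  ext i j
  fin_cases i <;> fin_cases j <;>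
    simp [Ring.lie_def, mul_apply, hA', hB']
  · ring
  · ring
  · ring
  · linear_combination (A 1 0 * B 0 1 - A 0 1 * B 1 0) * h2

lemma single_zero_one_notMem_center [Nontrivial R] :
    single 0 1 (1 : R) ∉ center R (Matrix (Fin 2) (Fin 2) R) := by
  intro h
  have hcomm := (LieModule.mem_maxTrivSubmodule _ _ _ _).mp h (single 0 0 1)
  have hentry := congrFun (congrFun hcomm 0) 1
  simp [Ring.lie_def, single_mul_single_same, single_mul_single_of_ne] at hentry

end Matrix

lemma SpecialLinear.sl_two_lie_lie_eq_zero {R : Type*} [CommRing R] (h2 : (2 : R) = 0)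
    (a b c : SpecialLinear.sl (Fin 2) R) : ⁅⁅a, b⁆, c⁆ = 0 := by
  ext : 1
  rw [LieSubalgebra.coe_bracket, LieSubalgebra.coe_bracket,
    Matrix.lie_eq_smul_one_of_trace_eq_zero h2 a.2 b.2]
  simp [Ring.lie_def]

lemma Function.Surjective.lie_lie_eq_zero {R L L' : Type*} [CommRing R] [LieRing L]
    [LieAlgebra R L] [LieRing L'] [LieAlgebra R L'] {f : L →ₗ⁅R⁆ L'} (hf : Function.Surjective f)
    (h : ∀ a b c : L, ⁅⁅a, b⁆, c⁆ = 0) (u v w : L') : ⁅⁅u, v⁆, w⁆ = 0 := by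
  obtain ⟨a, rfl⟩ := hf u
  obtain ⟨b, rfl⟩ := hf v
  obtain ⟨c, rfl⟩ := hf w
  rw [← f.map_lie, ← f.map_lie, h, map_zero]

lemma pgl_two_exists_lie_lie_ne_zero (R : Type*) [CommRing R] [Nontrivial R] :
    ∃ u v w : Matrix (Fin 2) (Fin 2) R ⧸ center R (Matrix (Fin 2) (Fin 2) R),
      ⁅⁅u, v⁆, w⁆ ≠ 0 := by
  let π := LieSubmodule.Quotient.mk (N := center R (Matrix (Fin 2) (Fin 2) R))
  let E (i j : Fin 2) : Matrix (Fin 2) (Fin 2) R := Matrix.single i j 1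
  refine ⟨π (E 0 0), π (E 0 1), π (E 0 0), ?_⟩
  have hbracket : ⁅⁅E 0 0, E 0 1⁆, E 0 0⁆ = -E 0 1 := by
    simp [E, Ring.lie_def, Matrix.single_mul_single_same, Matrix.single_mul_single_of_ne]
  rw [← LieSubmodule.Quotient.mk_bracket, ← LieSubmodule.Quotient.mk_bracket, hbracket,
    Ne, LieSubmodule.Quotient.mk_eq_zero', neg_mem_iff]
  exact Matrix.single_zero_one_notMem_center

/-- Over a field `k` of characteristic `2`, there is no isomorphism of Lie algebras
between `sl₂(k)` and `pgl₂(k) = gl₂(k)/Z`, where `Z` is the center of `gl₂(k)`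
(the scalar matrices). -/
theorem sl2_not_iso_pgl2_char_two (k : Type*) [Field k] (h2 : (2 : k) = 0) :
    IsEmpty ((SpecialLinear.sl (Fin 2) k) ≃ₗ⁅k⁆
      (Matrix (Fin 2) (Fin 2) k ⧸ LieAlgebra.center k (Matrix (Fin 2) (Fin 2) k))) := by
  refine ⟨fun e => ?_⟩
  obtain ⟨u, v, w, hne⟩ := pgl_two_exists_lie_lie_ne_zero k
  exact hne (e.surjective.lie_lie_eq_zero (f := e.toLieHom)
    (SpecialLinear.sl_two_lie_lie_eq_zero h2) u v w)
end

section
/- Let R be a commutative Noetherian local ring, let φ : R^s → R^r be an injective R-linear map, and let M = coker(φ). Let φ* : Hom_R(R^r,R) → Hom_R(R^s,R) be the dual (transpose) map and let E = coker(φ*). Then the R-module Hom_R(M,R) is free if and only if there exists an exact sequence 0 → F₂ → F₁ → F₀ → E → 0 of R-modules in which each Fᵢ is a finite free R-module (i.e. E has a finite free resolution of length at most 2). -/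
/-!
Dualising `R^s → R^r → coker φ → 0` identifies `Hom(coker φ, R)` with `K = ker φ*`, so `E` has
the resolution `0 → K → (R^r)* → (R^s)* → E → 0`. If `K` is free it is finite (a free submodule
of a finite free module has finite rank) and this resolution is the one sought. Conversely,
Schanuel's lemma applied twice compares it with a given finite free resolution of `E` and gives
`K × F ≃ F'` with `F`, `F'` finite free; so `K` is finitely generated projective, hence free over
the local ring `R`.
-/

open LinearMap Function

section

variable {R : Type*} [CommRing R] {P Q E P₁ P₀ Q₁ Q₀ : Type*} [AddCommGroup P] [AddCommGroup Q]
  [AddCommGroup E] [AddCommGroup P₁] [AddCommGroup P₀] [AddCommGroup Q₁] [AddCommGroup Q₀]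
  [Module R P] [Module R Q] [Module R E] [Module R P₁] [Module R P₀] [Module R Q₁] [Module R Q₀]

theorem Function.Exact.surjective_codRestrict_ker {f : P₁ →ₗ[R] P₀} {g : P₀ →ₗ[R] E}
    (h : Exact f g) : Surjective (f.codRestrict (ker g) h.apply_apply_eq_zero) := by
  rintro ⟨y, hy⟩
  obtain ⟨x, rfl⟩ := (h y).mp hy
  exact ⟨x, rfl⟩

noncomputable def LinearMap.kerProdMapIdEquiv (f : P₁ →ₗ[R] P₀) (Q : Type*) [AddCommGroup Q]
    [Module R Q] : ker (f.prodMap (LinearMap.id : Q →ₗ[R] Q)) ≃ₗ[R] ker f :=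
  (LinearEquiv.ofEq _ _ (by rw [ker_prodMap, ker_id, Submodule.map_inl])).trans
    (Submodule.equivMapOfInjective _ inl_injective _).symm

namespace Module

theorem nonempty_ker_coprod_equiv_ker_prod [Projective R Q] (f : P →ₗ[R] E) (g : Q →ₗ[R] E)
    (hf : Surjective f) : Nonempty (ker (f.coprod g) ≃ₗ[R] ker f × Q) := by
  obtain ⟨h, hfh⟩ := projective_lifting_property f g hf
  have hfh' (q : Q) : f (h q) = g q := LinearMap.congr_fun hfh q
  exact ⟨
    { toFun x := (⟨x.1.1 + h x.1.2, by rw [mem_ker, map_add, hfh']; exact x.2⟩, x.1.2)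
      invFun y := ⟨(y.1.1 - h y.2, y.2), by simp [hfh', mem_ker.mp y.1.2]⟩
      map_add' x y := by ext <;> simp; abel
      map_smul' c x := by ext <;> simp
      left_inv x := by ext <;> simp
      right_inv y := by ext <;> simp }⟩

theorem schanuel [Projective R P] [Projective R Q] (f : P →ₗ[R] E) (g : Q →ₗ[R] E)
    (hf : Surjective f) (hg : Surjective g) : Nonempty ((ker f × Q) ≃ₗ[R] (ker g × P)) := by
  obtain ⟨e₁⟩ := nonempty_ker_coprod_equiv_ker_prod f g hf
  obtain ⟨e₂⟩ := nonempty_ker_coprod_equiv_ker_prod g f hg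
  have hswap : (ker (f.coprod g)).map (LinearEquiv.prodComm R P Q : P × Q →ₗ[R] Q × P) =
      ker (g.coprod f) := by
    rw [Submodule.map_equiv_eq_comap_symm, ← ker_comp]
    congr 1
    ext <;> simp [add_comm]
  exact ⟨e₁.symm.trans ((LinearEquiv.prodComm R P Q).ofSubmodules _ _ hswap |>.trans e₂)⟩

theorem schanuel_of_exact [Projective R P₁] [Projective R P₀] [Projective R Q₁]
    [Projective R Q₀] {f₁ : P₁ →ₗ[R] P₀} {f₀ : P₀ →ₗ[R] E} {g₁ : Q₁ →ₗ[R] Q₀}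
    {g₀ : Q₀ →ₗ[R] E} (hf : Exact f₁ f₀) (hg : Exact g₁ g₀) (hf₀ : Surjective f₀)
    (hg₀ : Surjective g₀) : Nonempty ((ker f₁ × (Q₁ × P₀)) ≃ₗ[R] (ker g₁ × (P₁ × Q₀))) := by
  obtain ⟨e⟩ := schanuel f₀ g₀ hf₀ hg₀
  let c := f₁.codRestrict (ker f₀) hf.apply_apply_eq_zero
  let d := g₁.codRestrict (ker g₀) hg.apply_apply_eq_zero
  obtain ⟨e'⟩ := schanuel (c.prodMap (LinearMap.id : Q₀ →ₗ[R] Q₀))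
    (e.symm.toLinearMap ∘ₗ d.prodMap (LinearMap.id : P₀ →ₗ[R] P₀))
    (hf.surjective_codRestrict_ker.prodMap surjective_id)
    (e.symm.surjective.comp (hg.surjective_codRestrict_ker.prodMap surjective_id))
  let kc : ker (c.prodMap (LinearMap.id : Q₀ →ₗ[R] Q₀)) ≃ₗ[R] ker f₁ :=
    (c.kerProdMapIdEquiv Q₀).trans (.ofEq _ _ (ker_codRestrict _ _ _))
  let kd : ker (e.symm.toLinearMap ∘ₗ d.prodMap (LinearMap.id : P₀ →ₗ[R] P₀)) ≃ₗ[R] ker g₁ :=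
    (LinearEquiv.ofEq _ _ (LinearEquiv.ker_comp _ _)).trans
      ((d.kerProdMapIdEquiv P₀).trans (.ofEq _ _ (ker_codRestrict _ _ _)))
  exact ⟨(kc.symm.prodCongr (.refl R _)).trans (e'.trans (kd.prodCongr (.refl R _)))⟩

theorem free_of_prod_linearEquiv [IsLocalRing R] {F : Type*} [AddCommGroup F] [Module R F]
    [Free R F] [Module.Finite R F] (e : (P × Q) ≃ₗ[R] F) : Free R P := by
  have : Projective R (P × Q) := .of_equiv' e.symm
  have : Projective R P := .of_split (inl R P Q) (fst R P Q) (fst_comp_inl R P Q)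
  have : Module.Finite R (P × Q) := .equiv e.symm
  have : Module.Finite R P := .of_surjective (fst R P Q) fst_surjective
  have : FinitePresentation R P := finitePresentation_of_projective R P
  exact free_of_flat_of_isLocalRing

variable (R) in
theorem Free.exists_linearEquiv_fin (F : Type*) [AddCommGroup F] [Module R F] [Free R F]
    [Module.Finite R F] : ∃ n, Nonempty (F ≃ₗ[R] (Fin n → R)) :=
  ⟨_, ⟨((chooseBasis R F).reindex (Fintype.equivFin _)).equivFun⟩⟩

theorem exists_fin_resolution_of_exact {F₂ F₁ F₀ : Type*} [AddCommGroup F₂] [AddCommGroup F₁]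
    [AddCommGroup F₀] [Module R F₂] [Module R F₁] [Module R F₀] [Free R F₂] [Free R F₁]
    [Free R F₀] [Module.Finite R F₂] [Module.Finite R F₁] [Module.Finite R F₀]
    {f₂ : F₂ →ₗ[R] F₁} {f₁ : F₁ →ₗ[R] F₀} {f₀ : F₀ →ₗ[R] E} (h₂ : Function.Injective f₂)
    (h₂₁ : Exact f₂ f₁) (h₁₀ : Exact f₁ f₀) (h₀ : Surjective f₀) :
    ∃ (n₂ n₁ n₀ : ℕ) (g₂ : (Fin n₂ → R) →ₗ[R] (Fin n₁ → R))
      (g₁ : (Fin n₁ → R) →ₗ[R] (Fin n₀ → R)) (g₀ : (Fin n₀ → R) →ₗ[R] E),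
      Function.Injective g₂ ∧ Exact g₂ g₁ ∧ Exact g₁ g₀ ∧ Surjective g₀ := by
  obtain ⟨n₂, ⟨e₂⟩⟩ := Free.exists_linearEquiv_fin R F₂
  obtain ⟨n₁, ⟨e₁⟩⟩ := Free.exists_linearEquiv_fin R F₁
  obtain ⟨n₀, ⟨e₀⟩⟩ := Free.exists_linearEquiv_fin R F₀
  refine ⟨n₂, n₁, n₀, e₁ ∘ₗ f₂ ∘ₗ e₂.symm, e₀ ∘ₗ f₁ ∘ₗ e₁.symm, f₀ ∘ₗ e₀.symm,
    ?_, ?_, ?_, ?_⟩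
  · simpa using h₂
  · exact h₂₁.of_ladder_linearEquiv_of_exact (e₁ := e₂) (e₂ := e₁) (e₃ := e₀)
      (by ext; simp) (by ext; simp)
  · exact h₁₀.of_ladder_linearEquiv_of_exact (e₁ := e₁) (e₂ := e₀) (e₃ := .refl R E)
      (by ext; simp) (by ext; simp)
  · simpa using h₀

end Module

end

open Module

theorem dual_free_iff_finite_free_resolution_general (R : Type*) [CommRing R]
    [IsLocalRing R] (s r : ℕ)
    (φ : (Fin s → R) →ₗ[R] (Fin r → R)) :
    Module.Free R ((((Fin r → R) ⧸ LinearMap.range φ)) →ₗ[R] R) ↔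
      ∃ (n₂ n₁ n₀ : ℕ) (f₂ : (Fin n₂ → R) →ₗ[R] (Fin n₁ → R))
        (f₁ : (Fin n₁ → R) →ₗ[R] (Fin n₀ → R))
        (f₀ : (Fin n₀ → R) →ₗ[R]
          (Module.Dual R (Fin s → R) ⧸ LinearMap.range φ.dualMap)),
        Function.Injective f₂ ∧ Function.Exact f₂ f₁ ∧ Function.Exact f₁ f₀ ∧
          Function.Surjective f₀ := by
  let eK : (((Fin r → R) ⧸ range φ) →ₗ[R] R) ≃ₗ[R] ker φ.dualMap :=
    (range φ).dualQuotEquivDualAnnihilator.trans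
      (.ofEq _ _ φ.ker_dualMap_eq_dualAnnihilator_range.symm)
  constructor
  · intro hfree
    have : Free R (ker φ.dualMap) := .of_equiv eK
    have : Module.Finite R (ker φ.dualMap) :=
      rank_lt_aleph0_iff.mp ((Submodule.rank_le _).trans_lt (rank_lt_aleph0 R _))
    exact exists_fin_resolution_of_exact (ker φ.dualMap).injective_subtype
      (exact_subtype_ker_map _) (exact_map_mkQ_range _) (Submodule.mkQ_surjective _)
  · rintro ⟨n₂, n₁, n₀, f₂, f₁, f₀, h₂, h₂₁, h₁₀, h₀⟩
    obtain ⟨e⟩ := schanuel_of_exact h₁₀ (exact_map_mkQ_range φ.dualMap) h₀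
      (Submodule.mkQ_surjective _)
    let e₂ : (Fin n₂ → R) ≃ₗ[R] ker f₁ :=
      (LinearEquiv.ofInjective f₂ h₂).trans (.ofEq _ _ h₂₁.linearMap_ker_eq.symm)
    have : Free R (ker f₁) := .of_equiv e₂
    have : Module.Finite R (ker f₁) := .equiv e₂
    have : Free R (ker φ.dualMap) := free_of_prod_linearEquiv (P := ker φ.dualMap) e.symm
    exact .of_equiv eK.symm

/-- Let `R` be a commutative Noetherian local ring, `φ : R^s → R^r` an injective linear map,
`M = coker φ` and `E = coker φ*` (the cokernel of the dual map). Then `Hom_R(M, R)` is a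
free `R`-module if and only if `E` admits a finite free resolution of length at most `2`,
i.e. there is an exact sequence `0 → F₂ → F₁ → F₀ → E → 0` with each `Fᵢ` finite free. -/
theorem dual_free_iff_finite_free_resolution (R : Type*) [CommRing R]
    [IsNoetherianRing R] [IsLocalRing R] (s r : ℕ)
    (φ : (Fin s → R) →ₗ[R] (Fin r → R)) (hφ : Function.Injective φ) :
    Module.Free R ((((Fin r → R) ⧸ LinearMap.range φ)) →ₗ[R] R) ↔
      ∃ (n₂ n₁ n₀ : ℕ) (f₂ : (Fin n₂ → R) →ₗ[R] (Fin n₁ → R))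
        (f₁ : (Fin n₁ → R) →ₗ[R] (Fin n₀ → R))
        (f₀ : (Fin n₀ → R) →ₗ[R]
          (Module.Dual R (Fin s → R) ⧸ LinearMap.range φ.dualMap)),
        Function.Injective f₂ ∧ Function.Exact f₂ f₁ ∧ Function.Exact f₁ f₀ ∧
          Function.Surjective f₀ :=
  dual_free_iff_finite_free_resolution_general R s r φ
end

section
/- Let k be a field of characteristic 2 and let n, r be integers with n ≥ 2 and 1 ≤ r ≤ n-1. In the polynomial ring A = k[x,y,z] let P = z² + x²·y + y^n·z + x·y^{n-r}·z and let 𝔟 be the ideal of A generated by P together with the three partial derivatives ∂P/∂x, ∂P/∂y, ∂P/∂z. Then the quotient ring A/𝔟 is a finite-dimensional k-vector space of dimension exactly 4n - 2r. -/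
/-!
Write `n = m + 1 + r`. In characteristic 2 we have `∂P/∂x = y^{m+1} z`; since `r ≥ 1`, the term
`n y^{n-1} z` of `∂P/∂y` is a multiple of it, and `P ≡ z² + y ∂P/∂y` modulo it. So the Tjurina
ideal of `P` is `(z², y^{m+1} z, x² + (m + 1) x y^m z, x y^{m+1} + y^n)`.

Over any field and for any `c`, reduce modulo
`I = (z², y^{m+1} z, x² + c x y^m z, x y^{m+1} + y^{m+1+r})` with the rules `x² ↦ -c x y^m z`,
`x y^b ↦ -y^{b+r}` for `b > m`, and `z², x³, x²y, x²z, y^{m+1} z, y^{m+1+2r} ↦ 0`. This gives a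
`k`-linear normal form map onto the span `V` of the monomials `x^a y^b z^e` with `a, e ≤ 1` and
`b < m + 1 + 2r` if `a = e = 0`, `b ≤ m` otherwise. It kills `I`, fixes `V`, and `f` minus its
normal form lies in `I`; so `I` and `V` are complementary and
`dim k[x,y,z]/I = (m + 1 + 2r) + 3(m + 1) = 4n - 2r`.
-/

open MvPolynomial Finset

lemma MvPolynomial.map_eq_zero_of_mem_span {σ R M : Type*} [CommSemiring R] [AddCommMonoid M]
    [Module R M] (L : MvPolynomial σ R →ₗ[R] M) {G : Set (MvPolynomial σ R)}
    (hG : ∀ g ∈ G, ∀ u, L (monomial u 1 * g) = 0) {f : MvPolynomial σ R}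
    (hf : f ∈ Ideal.span G) : L f = 0 := by
  suffices h : ∀ p, L (p * f) = 0 by simpa using h 1
  induction hf using Submodule.span_induction with
  | mem g hg =>
    intro p
    induction p using MvPolynomial.induction_on' with
    | monomial u t =>
      rw [show monomial u t = t • monomial u 1 by rw [smul_monomial, smul_eq_mul, mul_one],
        smul_mul_assoc, map_smul, hG g hg, smul_zero]
    | add p q hp hq => rw [add_mul, map_add, hp, hq, add_zero]
  | zero => simp
  | add f g _ _ hf hg => intro p; rw [mul_add, map_add, hf, hg, add_zero]
  | smul a f _ hf => intro p; rw [smul_eq_mul, ← mul_assoc, hf]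

lemma Ideal.mem_span_four {R : Type*} [CommSemiring R] {f a b c d : R} (p q s t : R)
    (h : f = p * a + q * b + s * c + t * d) : f ∈ Ideal.span {a, b, c, d} := by
  rw [h]
  refine add_mem (add_mem (add_mem ?_ ?_) ?_) ?_ <;>
    exact Ideal.mul_mem_left _ _ (Ideal.subset_span (by simp))

lemma Ideal.span_four_le {R : Type*} [CommSemiring R] {a b c d : R} {I : Ideal R} :
    Ideal.span {a, b, c, d} ≤ I ↔ a ∈ I ∧ b ∈ I ∧ c ∈ I ∧ d ∈ I := by
  simp [Ideal.span_le, Set.insert_subset_iff]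

namespace D2n1

variable {k : Type*} [Field k]

noncomputable def exps (a b e : ℕ) : Fin 3 →₀ ℕ := Finsupp.equivFunOnFinite.symm ![a, b, e]

@[simp] lemma exps_apply_zero (a b e : ℕ) : exps a b e 0 = a := by simp [exps]
@[simp] lemma exps_apply_one (a b e : ℕ) : exps a b e 1 = b := by simp [exps]
@[simp] lemma exps_apply_two (a b e : ℕ) : exps a b e 2 = e := by simp [exps]

lemma exps_eta (u : Fin 3 →₀ ℕ) : exps (u 0) (u 1) (u 2) = u := by
  ext i; fin_cases i <;> simp

lemma exps_inj {a b e a' b' e' : ℕ} :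
    exps a b e = exps a' b' e' ↔ a = a' ∧ b = b' ∧ e = e' := by
  refine ⟨fun h => ⟨?_, ?_, ?_⟩, by rintro ⟨rfl, rfl, rfl⟩; rfl⟩
  · simpa using DFunLike.congr_fun h 0
  · simpa using DFunLike.congr_fun h 1
  · simpa using DFunLike.congr_fun h 2

variable (k) in
noncomputable def mon (a b e : ℕ) : MvPolynomial (Fin 3) k := monomial (exps a b e) 1

lemma mon_eq (a b e : ℕ) : mon k a b e = X 0 ^ a * X 1 ^ b * X 2 ^ e := by
  rw [mon, monomial_eq, Finsupp.prod_fintype _ _ (fun _ => pow_zero _)]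
  simp [Fin.prod_univ_three, mul_assoc]

lemma mon_mul (a b e a' b' e' : ℕ) :
    mon k a b e * mon k a' b' e' = mon k (a + a') (b + b') (e + e') := by
  rw [mon_eq, mon_eq, mon_eq]; ring

lemma monomial_one_eq_mon (u : Fin 3 →₀ ℕ) : monomial u (1 : k) = mon k (u 0) (u 1) (u 2) := by
  rw [mon, exps_eta]

lemma monomial_eq_smul_mon (u : Fin 3 →₀ ℕ) (t : k) :
    monomial u t = t • mon k (u 0) (u 1) (u 2) := by
  rw [← monomial_one_eq_mon, smul_monomial, smul_eq_mul, mul_one]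

lemma mon_mem_of_le {J : Ideal (MvPolynomial (Fin 3) k)} {a b e a' b' e' : ℕ}
    (h : mon k a b e ∈ J) (ha : a ≤ a') (hb : b ≤ b') (he : e ≤ e') : mon k a' b' e' ∈ J := by
  have hmul := mon_mul (k := k) (a' - a) (b' - b) (e' - e) a b e
  rw [Nat.sub_add_cancel ha, Nat.sub_add_cancel hb, Nat.sub_add_cancel he] at hmul
  exact hmul ▸ J.mul_mem_left _ h

variable (k) in
noncomputable def modelIdeal (m r : ℕ) (c : k) : Ideal (MvPolynomial (Fin 3) k) :=
  Ideal.span {X 2 ^ 2, X 1 ^ (m + 1) * X 2, X 0 ^ 2 + C c * (X 0 * X 1 ^ m * X 2),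
    X 0 * X 1 ^ (m + 1) + X 1 ^ (m + 1 + r)}

lemma modelIdeal_eq_span_mon (m r : ℕ) (c : k) :
    modelIdeal k m r c = Ideal.span {mon k 0 0 2, mon k 0 (m + 1) 1,
      mon k 2 0 0 + c • mon k 1 m 1, mon k 1 (m + 1) 0 + mon k 0 (m + 1 + r) 0} := by
  simp only [modelIdeal, mon_eq, smul_eq_C_mul, pow_zero, one_mul, mul_one, pow_one]

variable (k) in
noncomputable def normalForm (m r : ℕ) (c : k) : ℕ → ℕ → ℕ → MvPolynomial (Fin 3) k
  | 0, b, 0 => if b < m + 1 + 2 * r then mon k 0 b 0 else 0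
  | 0, b, 1 => if b ≤ m then mon k 0 b 1 else 0
  | 1, b, 0 => if b ≤ m then mon k 1 b 0 else if b ≤ m + r then -mon k 0 (b + r) 0 else 0
  | 1, b, 1 => if b ≤ m then mon k 1 b 1 else 0
  | 2, b, 0 => if b = 0 then -(c • mon k 1 m 1) else 0
  | _, _, _ => 0

variable (k) in
noncomputable def normalFormMap (m r : ℕ) (c : k) :
    MvPolynomial (Fin 3) k →ₗ[k] MvPolynomial (Fin 3) k :=
  (basisMonomials (Fin 3) k).constr k fun u => normalForm k m r c (u 0) (u 1) (u 2)

variable {m r : ℕ} {c : k}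

@[simp] lemma normalFormMap_mon (a b e : ℕ) :
    normalFormMap k m r c (mon k a b e) = normalForm k m r c a b e := by
  simpa [coe_basisMonomials, normalFormMap, mon] using (basisMonomials (Fin 3) k).constr_basis k
    (fun u => normalForm k m r c (u 0) (u 1) (u 2)) (exps a b e)

section Kernel

variable (a b e : ℕ)

lemma normalFormMap_mon_mul_z_sq : normalFormMap k m r c (mon k a b e * mon k 0 0 2) = 0 := by
  rw [mon_mul, normalFormMap_mon]
  rcases a with _ | _ | _ | a <;> simp [normalForm]

lemma normalFormMap_mon_mul_y_pow_mul_z :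
    normalFormMap k m r c (mon k a b e * mon k 0 (m + 1) 1) = 0 := by
  have hb : ¬ b + (m + 1) ≤ m := by omega
  rw [mon_mul, normalFormMap_mon]
  rcases a with _ | _ | _ | a <;> rcases e with _ | e <;> simp [normalForm, hb]

lemma normalFormMap_mon_mul_x_sq_add :
    normalFormMap k m r c (mon k a b e * (mon k 2 0 0 + c • mon k 1 m 1)) = 0 := by
  rw [mul_add, mul_smul_comm, mon_mul, mon_mul, map_add, map_smul, normalFormMap_mon,
    normalFormMap_mon]
  rcases a with _ | _ | a <;> rcases e with _ | _ | e <;> rcases b with _ | b <;> simp [normalForm]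

lemma normalFormMap_mon_mul_x_mul_y_pow_add :
    normalFormMap k m r c (mon k a b e * (mon k 1 (m + 1) 0 + mon k 0 (m + 1 + r) 0)) = 0 := by
  rw [mul_add, mon_mul, mon_mul, map_add, normalFormMap_mon, normalFormMap_mon]
  rcases a with _ | _ | _ | a <;> rcases e with _ | _ | e <;> simp only [normalForm] <;>
    (try split_ifs) <;> first | (exfalso; omega) | simp [add_assoc]

end Kernel

lemma normalFormMap_eq_zero_of_mem {f : MvPolynomial (Fin 3) k} (hf : f ∈ modelIdeal k m r c) :
    normalFormMap k m r c f = 0 := by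
  rw [modelIdeal_eq_span_mon] at hf
  refine map_eq_zero_of_mem_span _ (fun g hg u => ?_) hf
  rw [monomial_one_eq_mon]
  simp only [Set.mem_insert_iff, Set.mem_singleton_iff] at hg
  rcases hg with rfl | rfl | rfl | rfl
  exacts [normalFormMap_mon_mul_z_sq .., normalFormMap_mon_mul_y_pow_mul_z ..,
    normalFormMap_mon_mul_x_sq_add .., normalFormMap_mon_mul_x_mul_y_pow_add ..]

section Membership

variable (m r c)

lemma z_sq_mem : mon k 0 0 2 ∈ modelIdeal k m r c :=
  Ideal.mem_span_four 1 0 0 0 (by simp [mon_eq])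

lemma y_pow_mul_z_mem : mon k 0 (m + 1) 1 ∈ modelIdeal k m r c :=
  Ideal.mem_span_four 0 1 0 0 (by simp [mon_eq])

lemma x_sq_add_mem : mon k 2 0 0 + c • mon k 1 m 1 ∈ modelIdeal k m r c :=
  Ideal.mem_span_four 0 0 1 0 (by simp [mon_eq, smul_eq_C_mul])

lemma x_mul_y_pow_add_mem_of_le {b : ℕ} (hb : m + 1 ≤ b) :
    mon k 1 b 0 + mon k 0 (b + r) 0 ∈ modelIdeal k m r c := by
  obtain ⟨t, rfl⟩ := Nat.exists_eq_add_of_le' hb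
  exact Ideal.mem_span_four 0 0 0 (X 1 ^ t) (by simp only [mon_eq]; ring)

lemma x_sq_mul_z_mem : mon k 2 0 1 ∈ modelIdeal k m r c :=
  Ideal.mem_span_four (-(C c * X 0 * X 1 ^ m)) 0 (X 2) 0 (by simp only [mon_eq]; ring)

lemma x_sq_mul_y_mem : mon k 2 1 0 ∈ modelIdeal k m r c :=
  Ideal.mem_span_four 0 (-(C c * X 0)) (X 1) 0 (by simp only [mon_eq]; ring)

lemma x_cube_mem : mon k 3 0 0 ∈ modelIdeal k m r c :=
  Ideal.mem_span_four (C c ^ 2 * X 0 * X 1 ^ (2 * m)) 0 (X 0 - C c * X 1 ^ m * X 2) 0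
    (by simp only [mon_eq]; ring)

lemma y_pow_mem : mon k 0 (m + 1 + 2 * r) 0 ∈ modelIdeal k m r c :=
  Ideal.mem_span_four 0 (-(C c * X 0 * X 1 ^ m)) (X 1 ^ (m + 1)) (X 1 ^ r - X 0)
    (by simp only [mon_eq]; ring)

end Membership

lemma mon_sub_normalForm_mem (a b e : ℕ) :
    mon k a b e - normalForm k m r c a b e ∈ modelIdeal k m r c := by
  rcases a with _ | _ | _ | a <;> rcases e with _ | _ | e <;>
    simp only [normalForm, sub_zero, zero_add, Nat.reduceAdd]
  · split_ifs with hb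
    · simp
    · rw [sub_zero]
      exact mon_mem_of_le (y_pow_mem m r c) le_rfl (by omega) le_rfl
  · split_ifs with hb
    · simp
    · rw [sub_zero]
      exact mon_mem_of_le (y_pow_mul_z_mem m r c) le_rfl (by omega) le_rfl
  · exact mon_mem_of_le (z_sq_mem m r c) (Nat.zero_le _) (Nat.zero_le _) (by omega)
  · split_ifs with hb hb'
    · simp
    · rw [sub_neg_eq_add]
      exact x_mul_y_pow_add_mem_of_le m r c (by omega)
    · rw [sub_zero]
      simpa using sub_mem (x_mul_y_pow_add_mem_of_le m r c (b := b) (by omega))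
        (mon_mem_of_le (b' := b + r) (y_pow_mem m r c) le_rfl (by omega) le_rfl)
  · split_ifs with hb
    · simp
    · rw [sub_zero]
      exact mon_mem_of_le (y_pow_mul_z_mem m r c) (Nat.zero_le _) (by omega) le_rfl
  · exact mon_mem_of_le (z_sq_mem m r c) (Nat.zero_le _) (Nat.zero_le _) (by omega)
  · split_ifs with hb
    · subst hb
      simpa using x_sq_add_mem m r c
    · rw [sub_zero]
      exact mon_mem_of_le (x_sq_mul_y_mem m r c) le_rfl (by omega) le_rfl
  · exact mon_mem_of_le (x_sq_mul_z_mem m r c) le_rfl (Nat.zero_le _) le_rfl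
  · exact mon_mem_of_le (z_sq_mem m r c) (Nat.zero_le _) (Nat.zero_le _) (by omega)
  all_goals exact mon_mem_of_le (x_cube_mem m r c) (by omega) (Nat.zero_le _) (Nat.zero_le _)

lemma sub_normalFormMap_mem (f : MvPolynomial (Fin 3) k) :
    f - normalFormMap k m r c f ∈ modelIdeal k m r c := by
  induction f using MvPolynomial.induction_on' with
  | monomial u t =>
    rw [monomial_eq_smul_mon, map_smul, normalFormMap_mon, ← smul_sub]
    exact Submodule.smul_of_tower_mem _ t (mon_sub_normalForm_mem _ _ _)
  | add p q hp hq =>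
    rw [map_add, add_sub_add_comm]
    exact add_mem hp hq

variable (m r) in
noncomputable def stdExps : Finset (Fin 3 →₀ ℕ) :=
  (range 2 ×ˢ range 2).biUnion fun ae =>
    (range (if ae = (0, 0) then m + 1 + 2 * r else m + 1)).image (exps ae.1 · ae.2)

lemma exps_mem_stdExps {a b e : ℕ} :
    exps a b e ∈ stdExps m r ↔
      a ≤ 1 ∧ e ≤ 1 ∧ b < if (a, e) = (0, 0) then m + 1 + 2 * r else m + 1 := by
  simp only [stdExps, mem_biUnion, mem_product, mem_range, mem_image, exps_inj, Prod.exists]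
  constructor
  · rintro ⟨a, e, ⟨ha, he⟩, b, hb, rfl, rfl, rfl⟩
    exact ⟨by omega, by omega, hb⟩
  · rintro ⟨ha, he, hb⟩
    exact ⟨a, e, ⟨by omega, by omega⟩, b, hb, rfl, rfl, rfl⟩

lemma mon_mem_restrictSupport {a b e : ℕ} :
    mon k a b e ∈ restrictSupport k (stdExps m r : Set (Fin 3 →₀ ℕ)) ↔
      a ≤ 1 ∧ e ≤ 1 ∧ b < if (a, e) = (0, 0) then m + 1 + 2 * r else m + 1 := by
  rw [mon, monomial_mem_restrictSupport, mem_coe, exps_mem_stdExps, or_iff_left one_ne_zero]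

lemma normalForm_mem_restrictSupport (a b e : ℕ) :
    normalForm k m r c a b e ∈ restrictSupport k (stdExps m r : Set (Fin 3 →₀ ℕ)) := by
  rcases a with _ | _ | _ | a <;> rcases e with _ | _ | e <;> simp only [normalForm] <;>
    (try split_ifs) <;>
    simp only [zero_mem, neg_mem_iff, mon_mem_restrictSupport]
  all_goals first
    | exact Submodule.smul_mem _ c (mon_mem_restrictSupport.2 (by simp))
    | (simp; omega)

lemma normalFormMap_mem_restrictSupport (f : MvPolynomial (Fin 3) k) :
    normalFormMap k m r c f ∈ restrictSupport k (stdExps m r : Set (Fin 3 →₀ ℕ)) := by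
  induction f using MvPolynomial.induction_on' with
  | monomial u t =>
    rw [monomial_eq_smul_mon, map_smul, normalFormMap_mon]
    exact Submodule.smul_mem _ t (normalForm_mem_restrictSupport _ _ _)
  | add p q hp hq => rw [map_add]; exact add_mem hp hq

lemma normalFormMap_eq_self {f : MvPolynomial (Fin 3) k}
    (hf : f ∈ restrictSupport k (stdExps m r : Set (Fin 3 →₀ ℕ))) :
    normalFormMap k m r c f = f := by
  rw [restrictSupport_eq_span] at hf
  induction hf using Submodule.span_induction with
  | mem f hf =>
    obtain ⟨u, hu, rfl⟩ := hf
    dsimp only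
    rw [monomial_one_eq_mon, normalFormMap_mon]
    rw [← exps_eta u, mem_coe, exps_mem_stdExps] at hu
    obtain ⟨ha, he, hb⟩ := hu
    interval_cases u 0 <;> interval_cases u 2 <;> simp_all [normalForm]
  | zero => exact map_zero _
  | add f g _ _ hf hg => rw [map_add, hf, hg]
  | smul t f _ hf => rw [map_smul, hf]

lemma isCompl_modelIdeal_restrictSupport :
    IsCompl ((modelIdeal k m r c).restrictScalars k)
      (restrictSupport k (stdExps m r : Set (Fin 3 →₀ ℕ))) where
  disjoint := Submodule.disjoint_def.2 fun _ hI hS =>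
    (normalFormMap_eq_self (c := c) hS).symm.trans (normalFormMap_eq_zero_of_mem hI)
  codisjoint := Submodule.codisjoint_iff_exists_add_eq.2 fun f =>
    ⟨_, _, sub_normalFormMap_mem (c := c) f, normalFormMap_mem_restrictSupport f,
      sub_add_cancel _ _⟩

variable (k m r c) in
noncomputable def quotientEquiv :
    (MvPolynomial (Fin 3) k ⧸ modelIdeal k m r c) ≃ₗ[k]
      restrictSupport k (stdExps m r : Set (Fin 3 →₀ ℕ)) :=
  (Submodule.Quotient.restrictScalarsEquiv k _).symm ≪≫ₗ
    Submodule.quotientEquivOfIsCompl _ _ isCompl_modelIdeal_restrictSupport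

lemma card_stdExps : (stdExps m r).card = 4 * (m + 1) + 2 * r := by
  rw [stdExps, card_biUnion]
  · simp only [card_image_of_injective _ (fun b b' h => (exps_inj.1 h).2.1), card_range]
    simp only [sum_product, sum_range_succ, range_one, sum_singleton, Prod.mk.injEq, and_true,
      and_false, one_ne_zero, ↓reduceIte]
    ring
  · rintro ⟨a, e⟩ - ⟨a', e'⟩ - hne
    simp only [Function.onFun, disjoint_left, mem_image]
    rintro _ ⟨b, -, rfl⟩ ⟨b', -, h⟩
    obtain ⟨rfl, -, rfl⟩ := exps_inj.1 h
    exact hne rfl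

instance : FiniteDimensional k (MvPolynomial (Fin 3) k ⧸ modelIdeal k m r c) :=
  have := Module.Finite.of_basis (basisRestrictSupport k (stdExps m r : Set (Fin 3 →₀ ℕ)))
  Module.Finite.equiv (quotientEquiv k m r c).symm

lemma finrank_quotient_modelIdeal :
    Module.finrank k (MvPolynomial (Fin 3) k ⧸ modelIdeal k m r c) = 4 * (m + 1) + 2 * r := by
  rw [(quotientEquiv k m r c).finrank_eq, Module.finrank_eq_card_basis (basisRestrictSupport k _)]
  simp only [coe_sort_coe, Fintype.card_coe, card_stdExps]

theorem span_pderiv_eq_modelIdeal [CharP k 2] (hr : 1 ≤ r) :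
    let P : MvPolynomial (Fin 3) k :=
      X 2 ^ 2 + X 0 ^ 2 * X 1 + X 1 ^ (m + 1 + r) * X 2 + X 0 * X 1 ^ (m + 1) * X 2
    Ideal.span {P, pderiv 0 P, pderiv 1 P, pderiv 2 P} = modelIdeal k m r ((m + 1 : ℕ) : k) := by
  intro P
  obtain ⟨r, rfl⟩ := Nat.exists_eq_add_of_le' hr
  set n : MvPolynomial (Fin 3) k := ((m + 1 + (r + 1) : ℕ) : MvPolynomial (Fin 3) k)
  set c : MvPolynomial (Fin 3) k := ((m + 1 : ℕ) : MvPolynomial (Fin 3) k)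
  have h2 : (2 : MvPolynomial (Fin 3) k) = 0 := CharTwo.two_eq_zero
  obtain ⟨hx, hy, hz⟩ : pderiv 0 P = X 1 ^ (m + 1) * X 2 ∧
      pderiv 1 P = X 0 ^ 2 + n * X 1 ^ (m + 1 + r) * X 2 + c * (X 0 * X 1 ^ m * X 2) ∧
      pderiv 2 P = X 0 * X 1 ^ (m + 1) + X 1 ^ (m + 1 + (r + 1)) := by
    refine ⟨?_, ?_, ?_⟩ <;>
      simp only [P, n, c, map_add, pderiv_mul, pderiv_pow, pderiv_X_self, pderiv_X_of_ne, ne_eq,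
        Fin.reduceEq, not_false_eq_true, Nat.add_one_sub_one, Nat.add_succ_sub_one, Nat.cast_ofNat]
    · linear_combination X 0 * X 1 * h2
    · ring
    · linear_combination X 2 * h2
  rw [modelIdeal, map_natCast, hx, hy, hz]
  apply le_antisymm
  · rw [Ideal.span_four_le]
    exact ⟨Ideal.mem_span_four 1 (X 1 ^ (r + 1) + (1 - c) * X 0) (X 1) 0 (by simp only [P]; ring),
      Ideal.mem_span_four 0 1 0 0 (by ring), Ideal.mem_span_four 0 (n * X 1 ^ r) 1 0 (by ring),
      Ideal.mem_span_four 0 0 0 1 (by ring)⟩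
  · rw [Ideal.span_four_le]
    exact ⟨Ideal.mem_span_four 1 ((n - 1) * X 1 ^ (r + 1) + (c - 1) * X 0) (-X 1) 0
        (by simp only [P]; ring),
      Ideal.mem_span_four 0 1 0 0 (by ring), Ideal.mem_span_four 0 (-(n * X 1 ^ r)) 1 0 (by ring),
      Ideal.mem_span_four 0 0 0 1 (by ring)⟩

end D2n1

theorem tjurina_dim_D2n1_r_general (k : Type*) [Field k] [CharP k 2]
    (n r : ℕ) (hr1 : 1 ≤ r) (hr : r ≤ n - 1) :
    let P : MvPolynomial (Fin 3) k :=
      X 2 ^ 2 + X 0 ^ 2 * X 1 + X 1 ^ n * X 2 + X 0 * X 1 ^ (n - r) * X 2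
    let b : Ideal (MvPolynomial (Fin 3) k) :=
      Ideal.span {P, pderiv 0 P, pderiv 1 P, pderiv 2 P}
    FiniteDimensional k (MvPolynomial (Fin 3) k ⧸ b) ∧
      Module.finrank k (MvPolynomial (Fin 3) k ⧸ b) = 4 * n - 2 * r := by
  obtain ⟨m, rfl⟩ : ∃ m, n = m + 1 + r := ⟨n - r - 1, by omega⟩
  rw [Nat.add_sub_cancel]
  intro P b
  rw [show b = D2n1.modelIdeal k m r ((m + 1 : ℕ) : k) from D2n1.span_pderiv_eq_modelIdeal hr1,
    D2n1.finrank_quotient_modelIdeal]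
  exact ⟨inferInstance, by omega⟩

/-- For `P = z² + x²y + yⁿz + x·y^{n-r}·z` in `A = k[x,y,z]` over a field `k` of
characteristic `2`, with `n ≥ 2` and `1 ≤ r ≤ n - 1`, the quotient of `A` by the ideal
`𝔟 = (P, ∂P/∂x, ∂P/∂y, ∂P/∂z)` is a finite-dimensional `k`-vector space of dimension
exactly `4n - 2r`. -/
theorem tjurina_dim_D2n1_r (k : Type*) [Field k] [CharP k 2]
    (n r : ℕ) (hn : 2 ≤ n) (hr1 : 1 ≤ r) (hr : r ≤ n - 1) :
    let P : MvPolynomial (Fin 3) k :=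
      X 2 ^ 2 + X 0 ^ 2 * X 1 + X 1 ^ n * X 2 + X 0 * X 1 ^ (n - r) * X 2
    let b : Ideal (MvPolynomial (Fin 3) k) :=
      Ideal.span {P, pderiv 0 P, pderiv 1 P, pderiv 2 P}
    FiniteDimensional k (MvPolynomial (Fin 3) k ⧸ b) ∧
      Module.finrank k (MvPolynomial (Fin 3) k ⧸ b) = 4 * n - 2 * r :=
  tjurina_dim_D2n1_r_general k n r hr1 hr
end
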